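/- Let (P₁,P₂,P₃,P₄) be nonzero null vectors in ℂ^{n,1}, pairwise linearly independent, with normalized Gram matrix G. Then det G = (1/|X₂|²)·[−2·Re(X₁+X₂) − 2·Re(X₁·conj(X₂)·e^{−2i𝔸}) + |X₁|² + |X₂|² + 1], where X₁ = X(p₁,p₂,p₃,p₄), X₂ = X(p₁,p₃,p₂,p₄), and 𝔸 = 𝔸(p₁,p₂,p₃). -/

import Mathlib

/-!
Rescaling each `P i` by the conjugate of the `i`-th diagonal entry turns the normalized Gram
matrix into the Gram matrix of the rescaled quadruple, and neither cross-ratios nor the Cartan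
invariant see the rescaling. For null vectors that Gram matrix is
`[[0,1,a,b],[1,0,1,c],[ā,1,0,1],[b̄,c̄,1,0]]` with `|a| = 1`, where `X₁ = ā c̄ / b̄`, `X₂ = 1 / b̄`
and `e^{-2i𝔸} = a²`; the formula is then a polynomial identity in `a, b, c` modulo `a ā = 1`.
The one geometric input is `b ≠ 0`: two distinct null lines are never orthogonal.
-/

open Complex Matrix
open scoped ComplexConjugate

noncomputable section

/-- The Hermitian form of signature `(n,1)` on `ℂ^{n+1}`:
`⟨Z,W⟩ = Z₁·conj W_{n+1} + Z₂·conj W₂ + ⋯ + Z_n·conj W_n + Z_{n+1}·conj W₁`. -/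
def herm {n : ℕ} (Z W : Fin (n + 1) → ℂ) : ℂ :=
  Z 0 * conj (W (Fin.last n)) + Z (Fin.last n) * conj (W 0) +
    ∑ i ∈ Finset.univ.filter (fun i : Fin (n + 1) => i ≠ 0 ∧ i ≠ Fin.last n),
      Z i * conj (W i)

/-- The Gram matrix of a quadruple of vectors. -/
def gram {n : ℕ} (P : Fin 4 → Fin (n + 1) → ℂ) : Matrix (Fin 4) (Fin 4) ℂ :=
  fun i j => herm (P i) (P j)

/-- A quadruple of nonzero null vectors, pairwise linearly independent. -/
def IsNullQuadruple {n : ℕ} (P : Fin 4 → Fin (n + 1) → ℂ) : Prop :=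
  (∀ i, P i ≠ 0) ∧ (∀ i, herm (P i) (P i) = 0) ∧
    ∀ i j, i ≠ j → LinearIndependent ℂ ![P i, P j]

/-- The Korányi–Reimann complex cross-ratio. -/
def crossRatio {n : ℕ} (P₁ P₂ P₃ P₄ : Fin (n + 1) → ℂ) : ℂ :=
  (herm P₃ P₁ * herm P₄ P₂) / (herm P₄ P₁ * herm P₃ P₂)

/-- Cartan's angular invariant. -/
def cartan {n : ℕ} (P₁ P₂ P₃ : Fin (n + 1) → ℂ) : ℝ :=
  (-(herm P₁ P₂ * herm P₂ P₃ * herm P₃ P₁)).arg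

/-- `G` is the normalized Gram matrix of the quadruple `P`. -/
def IsNormalizedGram {n : ℕ} (P : Fin 4 → Fin (n + 1) → ℂ)
    (G : Matrix (Fin 4) (Fin 4) ℂ) : Prop :=
  (∃ d : Fin 4 → ℂ, (∀ i, d i ≠ 0) ∧
      G = (Matrix.diagonal d)ᴴ * gram P * Matrix.diagonal d) ∧
    G 0 1 = 1 ∧ G 1 2 = 1 ∧ G 2 3 = 1 ∧ ‖G 0 2‖ = 1

/-- Two quadruples are congruent if a linear map preserving the Hermitian form
sends one to the other up to nonzero scalars. -/
def CongruentQuad {n : ℕ} (P P' : Fin 4 → Fin (n + 1) → ℂ) : Prop :=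
  ∃ A : (Fin (n + 1) → ℂ) →ₗ[ℂ] (Fin (n + 1) → ℂ),
    (∀ Z W, herm (A Z) (A W) = herm Z W) ∧
    ∃ lam : Fin 4 → ℂ, (∀ i, lam i ≠ 0) ∧ ∀ i, A (P i) = lam i • P' i

section

variable {n : ℕ}

lemma herm_conj (Z W : Fin (n + 1) → ℂ) : conj (herm Z W) = herm W Z := by
  simp only [herm, map_add, map_sum, map_mul, conj_conj, mul_comm (conj _)]
  ring

lemma herm_smul_left (t : ℂ) (Z W : Fin (n + 1) → ℂ) :
    herm (t • Z) W = t * herm Z W := by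
  simp only [herm, Pi.smul_apply, smul_eq_mul, mul_add, Finset.mul_sum, mul_assoc]

lemma herm_smul_right (t : ℂ) (Z W : Fin (n + 1) → ℂ) :
    herm Z (t • W) = conj t * herm Z W := by
  rw [← herm_conj, herm_smul_left, map_mul, herm_conj]

lemma herm_add_left (Z Z' W : Fin (n + 1) → ℂ) :
    herm (Z + Z') W = herm Z W + herm Z' W := by
  simp only [herm, Pi.add_apply, add_mul, Finset.sum_add_distrib]
  ring

lemma herm_add_right (Z W W' : Fin (n + 1) → ℂ) :
    herm Z (W + W') = herm Z W + herm Z W' := by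
  rw [← herm_conj, herm_add_left, map_add, herm_conj, herm_conj]

/-- On the hyperplane `Z₀ = Z_{n+1}` the form is positive definite:
`⟨Z,Z⟩ = 2|Z₀|² + ∑ |Zᵢ|²`. -/
lemma eq_zero_of_herm_self_eq_zero {Z : Fin (n + 1) → ℂ} (hZ : herm Z Z = 0)
    (h0 : Z 0 = Z (Fin.last n)) : Z = 0 := by
  set S := Finset.univ.filter fun i : Fin (n + 1) => i ≠ 0 ∧ i ≠ Fin.last n
  have hre : 2 * normSq (Z 0) + ∑ i ∈ S, normSq (Z i) = 0 := by
    simpa [herm, S, ← h0, mul_conj, two_mul] using congrArg re hZ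
  have hS : 0 ≤ ∑ i ∈ S, normSq (Z i) := Finset.sum_nonneg fun i _ => normSq_nonneg (Z i)
  have hZ0 : Z 0 = 0 := normSq_eq_zero.mp (by nlinarith [normSq_nonneg (Z 0)])
  have hmid := (Finset.sum_eq_zero_iff_of_nonneg fun i _ => normSq_nonneg (Z i)).mp
    (by linarith [normSq_nonneg (Z 0)] : ∑ i ∈ S, normSq (Z i) = 0)
  funext i
  by_cases hi0 : i = 0
  · rw [hi0, hZ0, Pi.zero_apply]
  by_cases hil : i = Fin.last n
  · rw [hil, ← h0, hZ0, Pi.zero_apply]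
  exact normSq_eq_zero.mp (hmid i (by simp [S, hi0, hil]))

/-- If `⟨Z,W⟩ = 0` the span of `Z, W` is totally null, yet it contains the vector `s • Z + t • W`
of the positive definite hyperplane `Z₀ = Z_{n+1}`, which is nonzero unless `Z` lies there too. -/
lemma herm_ne_zero_of_linearIndependent {Z W : Fin (n + 1) → ℂ} (hZ : herm Z Z = 0)
    (hW : herm W W = 0) (hZW : LinearIndependent ℂ ![Z, W]) : herm Z W ≠ 0 := by
  intro h
  have hWZ : herm W Z = 0 := by rw [← herm_conj, h, map_zero]
  set s := W 0 - W (Fin.last n)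
  set t := Z (Fin.last n) - Z 0
  have hnull : herm (s • Z + t • W) (s • Z + t • W) = 0 := by
    simp [herm_add_left, herm_add_right, herm_smul_left, herm_smul_right, hZ, hW, h, hWZ]
  have hcomb : s • Z + t • W = 0 :=
    eq_zero_of_herm_self_eq_zero hnull <| by
      simp only [Pi.add_apply, Pi.smul_apply, smul_eq_mul, s, t]
      ring
  have ht : t = 0 := (LinearIndependent.pair_iff.mp hZW s t hcomb).2
  have hZ0 : Z = 0 := eq_zero_of_herm_self_eq_zero hZ (sub_eq_zero.mp ht).symm
  exact LinearIndependent.ne_zero 0 hZW (by simp [hZ0])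

lemma conjTranspose_diagonal_mul_gram_mul_diagonal (P : Fin 4 → Fin (n + 1) → ℂ)
    (d : Fin 4 → ℂ) :
    (diagonal d)ᴴ * _root_.gram P * diagonal d = _root_.gram fun i => star (d i) • P i := by
  ext i j
  simp only [_root_.gram, diagonal_conjTranspose, mul_diagonal, diagonal_mul, Pi.star_apply,
    herm_smul_left, herm_smul_right, RCLike.star_def, conj_conj]
  ring

lemma crossRatio_smul (P₁ P₂ P₃ P₄ : Fin (n + 1) → ℂ) {t₁ t₂ t₃ t₄ : ℂ}
    (h₁ : t₁ ≠ 0) (h₂ : t₂ ≠ 0) (h₃ : t₃ ≠ 0) (h₄ : t₄ ≠ 0) :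
    crossRatio (t₁ • P₁) (t₂ • P₂) (t₃ • P₃) (t₄ • P₄) = crossRatio P₁ P₂ P₃ P₄ := by
  have ht : t₃ * conj t₁ * (t₄ * conj t₂) ≠ 0 := by simp [h₁, h₂, h₃, h₄]
  simp only [crossRatio, herm_smul_left, herm_smul_right]
  rw [← mul_div_mul_left (herm P₃ P₁ * herm P₄ P₂) _ ht]
  congr 1 <;> ring

lemma cartan_smul (P₁ P₂ P₃ : Fin (n + 1) → ℂ) {t₁ t₂ t₃ : ℂ}
    (h₁ : t₁ ≠ 0) (h₂ : t₂ ≠ 0) (h₃ : t₃ ≠ 0) :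
    cartan (t₁ • P₁) (t₂ • P₂) (t₃ • P₃) = cartan P₁ P₂ P₃ := by
  have hpos : 0 < normSq t₁ * normSq t₂ * normSq t₃ := by
    have := normSq_pos.mpr h₁; have := normSq_pos.mpr h₂; have := normSq_pos.mpr h₃
    positivity
  have hprod : -(herm (t₁ • P₁) (t₂ • P₂) * herm (t₂ • P₂) (t₃ • P₃) * herm (t₃ • P₃) (t₁ • P₁))
      = ((normSq t₁ * normSq t₂ * normSq t₃ : ℝ) : ℂ)
        * -(herm P₁ P₂ * herm P₂ P₃ * herm P₃ P₁) := by
    simp only [herm_smul_left, herm_smul_right, ofReal_mul, ← mul_conj]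
    ring
  rw [cartan, hprod, arg_real_mul _ hpos, cartan]

lemma exp_neg_two_mul_arg_neg_conj {a : ℂ} (ha : ‖a‖ = 1) :
    exp (-(2 * ((-conj a).arg : ℂ) * I)) = a ^ 2 := by
  have hunit : exp ((-conj a).arg * I) = -conj a := by
    simpa [ha] using norm_mul_exp_arg_mul_I (-conj a)
  have hinv : (conj a)⁻¹ = a := by
    rw [inv_def, conj_conj, normSq_eq_norm_sq, norm_conj, ha]; simp
  calc exp (-(2 * ((-conj a).arg : ℂ) * I)) = (exp ((-conj a).arg * I))⁻¹ ^ 2 := by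
        rw [← Complex.exp_neg, ← Complex.exp_nat_mul]; ring_nf
    _ = a ^ 2 := by rw [hunit, inv_neg, neg_sq, hinv]

lemma det_normalizedGram_matrix (a b c : ℂ) :
    det !![0, 1, a, b; 1, 0, 1, c; conj a, 1, 0, 1; conj b, conj c, 1, 0] =
      1 + b * conj b + a * conj a * (c * conj c) - (b + conj b) - (a * conj c + conj a * c)
        - (conj a * b * conj c + a * conj b * c) := by
  simp only [det_succ_row_zero, Fin.sum_univ_succ, Fin.succAbove, submatrix_apply, of_apply,
    Fin.coe_ofNat_eq_mod, ↓reduceIte, cons_val, Fin.reduceCastSucc, Fin.reduceSucc, det_fin_zero,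
    Fin.reduceLT]
  ring

lemma det_normalizedGram (a b c X₁ X₂ : ℂ) (ha : ‖a‖ = 1) (hb : b ≠ 0)
    (hX₁ : X₁ = conj a * conj c / conj b) (hX₂ : X₂ = 1 / conj b) :
    det !![0, 1, a, b; 1, 0, 1, c; conj a, 1, 0, 1; conj b, conj c, 1, 0] =
      (((-2 * (X₁ + X₂).re - 2 * (X₁ * conj X₂ * a ^ 2).re
        + ‖X₁‖ ^ 2 + ‖X₂‖ ^ 2 + 1) / ‖X₂‖ ^ 2 : ℝ) : ℂ) := by
  have haa : a * conj a = 1 := by rw [mul_conj', ha]; simp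
  have hb' : conj b ≠ 0 := (map_ne_zero _).mpr hb
  push_cast
  simp only [det_normalizedGram_matrix, re_eq_add_conj, ← mul_conj', hX₁, hX₂, map_add, map_div₀,
    map_mul, map_pow, map_one, conj_conj]
  field_simp
  linear_combination (c * conj a + a * conj c) * haa

theorem det_gram_of_normalized_entries (Q : Fin 4 → Fin (n + 1) → ℂ)
    (hnull : ∀ i, herm (Q i) (Q i) = 0) (h03 : herm (Q 0) (Q 3) ≠ 0)
    (h01 : herm (Q 0) (Q 1) = 1) (h12 : herm (Q 1) (Q 2) = 1) (h23 : herm (Q 2) (Q 3) = 1)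
    (h02 : ‖herm (Q 0) (Q 2)‖ = 1) (X₁ X₂ : ℂ) (A : ℝ)
    (hX₁ : X₁ = crossRatio (Q 0) (Q 1) (Q 2) (Q 3))
    (hX₂ : X₂ = crossRatio (Q 0) (Q 2) (Q 1) (Q 3))
    (hA : A = cartan (Q 0) (Q 1) (Q 2)) :
    (_root_.gram Q).det = (((-2 * (X₁ + X₂).re
        - 2 * (X₁ * conj X₂ * exp (-(2 * (A : ℂ) * I))).re
        + ‖X₁‖ ^ 2 + ‖X₂‖ ^ 2 + 1) / ‖X₂‖ ^ 2 : ℝ) : ℂ) := by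
  have hswap : ∀ i j, herm (Q j) (Q i) = conj (herm (Q i) (Q j)) := fun i j =>
    (herm_conj _ _).symm
  have hgram : _root_.gram Q = !![0, 1, herm (Q 0) (Q 2), herm (Q 0) (Q 3);
      1, 0, 1, herm (Q 1) (Q 3);
      conj (herm (Q 0) (Q 2)), 1, 0, 1;
      conj (herm (Q 0) (Q 3)), conj (herm (Q 1) (Q 3)), 1, 0] := by
    ext i j
    fin_cases i <;> fin_cases j <;>
      simp [_root_.gram, hnull, h01, h12, h23, hswap 0 1, hswap 1 2, hswap 2 3, hswap 0 2,
        hswap 0 3, hswap 1 3]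
  have hexp : exp (-(2 * (A : ℂ) * I)) = herm (Q 0) (Q 2) ^ 2 := by
    rw [hA, cartan, hswap 0 2, h01, h12, one_mul, one_mul]
    exact exp_neg_two_mul_arg_neg_conj h02
  rw [hgram, hexp]
  refine det_normalizedGram _ _ _ _ _ h02 h03 ?_ ?_
  · rw [hX₁, crossRatio, hswap 0 2, hswap 1 3, hswap 0 3, hswap 1 2, h12, map_one, mul_one]
  · rw [hX₂, crossRatio, hswap 0 1, hswap 2 3, hswap 0 3, h01, h12, h23, map_one, mul_one,
      mul_one]

end

/-- determinant of the normalized Gram matrix in terms of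
`X₁, X₂, 𝔸`. -/
theorem stmt6 (n : ℕ) (P : Fin 4 → Fin (n + 1) → ℂ) (hP : IsNullQuadruple P)
    (G : Matrix (Fin 4) (Fin 4) ℂ) (hG : IsNormalizedGram P G)
    (X₁ X₂ : ℂ) (A : ℝ)
    (hX₁ : X₁ = crossRatio (P 0) (P 1) (P 2) (P 3))
    (hX₂ : X₂ = crossRatio (P 0) (P 2) (P 1) (P 3))
    (hA : A = cartan (P 0) (P 1) (P 2)) :
    G.det = (((-2 * (X₁ + X₂).re
        - 2 * (X₁ * conj X₂ * Complex.exp (-(2 * (A : ℂ) * Complex.I))).re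
        + ‖X₁‖ ^ 2 + ‖X₂‖ ^ 2 + 1) / ‖X₂‖ ^ 2 : ℝ) : ℂ) := by
  obtain ⟨⟨d, hd, rfl⟩, h01, h12, h23, h02⟩ := hG
  obtain ⟨-, hnull, hind⟩ := hP
  have hd' : ∀ i, star (d i) ≠ 0 := fun i => star_ne_zero.mpr (hd i)
  rw [conjTranspose_diagonal_mul_gram_mul_diagonal] at h01 h12 h23 h02 ⊢
  have h03 := herm_ne_zero_of_linearIndependent (hnull 0) (hnull 3) (hind 0 3 (by decide))
  refine det_gram_of_normalized_entries (fun i => star (d i) • P i) ?_ ?_ h01 h12 h23 h02 X₁ X₂ A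
    ?_ ?_ ?_
  · simp [herm_smul_left, herm_smul_right, hnull]
  · simp [herm_smul_left, herm_smul_right, hd, h03]
  · rw [hX₁, crossRatio_smul _ _ _ _ (hd' 0) (hd' 1) (hd' 2) (hd' 3)]
  · rw [hX₂, crossRatio_smul _ _ _ _ (hd' 0) (hd' 2) (hd' 1) (hd' 3)]
  · rw [hA, cartan_smul _ _ _ (hd' 0) (hd' 1) (hd' 2)]
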